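/- For even N → ∞, ∫_{√N}^{N} dt/(log(t) log(N - t)) ~ N/(log N)², and more precisely the integral equals N/(log N)² (1 + O(log log N / log N)). -/
import Mathlib
set_option maxHeartbeats 1000000

open intervalIntegral Real Set

theorem stmt_12 :
    ∃ C : ℝ, 0 < C ∧ ∃ N₀ : ℕ, ∀ N : ℕ, Even N → N₀ ≤ N →
      |(∫ t in Real.sqrt N..(N - Real.sqrt N),
          1 / (Real.log t * Real.log (N - t))) - N / (Real.log N) ^ 2|
        ≤ C * N * Real.log (Real.log N) / (Real.log N) ^ 3 := by
  refine ⟨20, by norm_num, 100, fun N _ hN => ?_⟩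
  have hn : (100:ℝ) ≤ (N:ℝ) := by exact_mod_cast hN
  set n : ℝ := (N:ℝ) with hn_def
  set f : ℝ → ℝ := fun t => 1 / (Real.log t * Real.log (n - t)) with hf
  set a : ℝ := Real.sqrt n with ha_def
  set L : ℝ := Real.log n with hL_def
  set K : ℝ := Real.log L with hK_def
  set c : ℝ := n / L with hc_def
  set d : ℝ := n - c with hd_def
  set b : ℝ := n - a with hb_def
  clear_value n f a L K c d b
  have hn0 : (0:ℝ) < n := by linarith
  have ha0' : (0:ℝ) ≤ a := ha_def ▸ Real.sqrt_nonneg n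
  have haa : a * a = n := by rw [ha_def]; exact Real.mul_self_sqrt (by linarith)
  have ha10 : (10:ℝ) ≤ a := by nlinarith [sq_nonneg (a - 10)]
  have ha0 : (0:ℝ) < a := by linarith
  have hlog_a : Real.log a = L / 2 := by
    rw [hL_def, ha_def, Real.log_sqrt (by linarith : (0:ℝ) ≤ n)]
  have hL3 : (3:ℝ) ≤ L := by
    rw [hL_def, Real.le_log_iff_exp_le hn0]
    have h1 : Real.exp 3 = (Real.exp 1)^3 := by
      rw [← Real.exp_nat_mul]; norm_num
    have h2 : Real.exp 1 < 2.7182818286 := Real.exp_one_lt_d9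
    have h3 : (Real.exp 1)^3 < 2.7182818286^3 :=
      pow_lt_pow_left₀ h2 (Real.exp_pos 1).le (by norm_num)
    nlinarith
  have hK1 : (1:ℝ) ≤ K := by
    rw [hK_def, Real.le_log_iff_exp_le (by linarith)]
    have := Real.exp_one_lt_d9
    linarith
  have hLa : L ≤ a := by
    have hsa : Real.sqrt a * Real.sqrt a = a := Real.mul_self_sqrt ha0.le
    have h1 : Real.log (Real.sqrt a) ≤ Real.sqrt a - 1 :=
      Real.log_le_sub_one_of_pos (Real.sqrt_pos.mpr ha0)
    have h2 : L = 4 * Real.log (Real.sqrt a) := by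
      rw [show Real.log (Real.sqrt a) = Real.log a / 2 from Real.log_sqrt ha0.le, hlog_a]; ring
    nlinarith [sq_nonneg (Real.sqrt a - 2)]
  have hKL : K ≤ L / 2 := by
    have hL0 : (0:ℝ) < L := by linarith
    have hsL : Real.sqrt L * Real.sqrt L = L := Real.mul_self_sqrt hL0.le
    have h1 : Real.log (Real.sqrt L) ≤ Real.sqrt L - 1 :=
      Real.log_le_sub_one_of_pos (Real.sqrt_pos.mpr hL0)
    have h2 : K = 2 * Real.log (Real.sqrt L) := by
      rw [hK_def, Real.log_sqrt hL0.le]; ring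
    nlinarith [sq_nonneg (Real.sqrt L - 2)]
  have hac : a ≤ c := by
    rw [hc_def, le_div_iff₀ (by linarith)]
    nlinarith
  have hc0 : 0 ≤ c := by rw [hc_def]; exact div_nonneg hn0.le (by linarith)
  have hcn3 : c ≤ n / 3 := by
    rw [hc_def]
    exact div_le_div_of_nonneg_left hn0.le (by norm_num) hL3
  have hcd : c ≤ d := by rw [hd_def]; linarith
  have hdb : d ≤ b := by rw [hd_def, hb_def]; linarith
  have hab : a ≤ b := by linarith
  -- pointwise bounds on the whole interval
  have hwhole : ∀ t ∈ Icc a b, L/2 ≤ Real.log t ∧ L/2 ≤ Real.log (n - t) := by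
    intro t ht
    constructor
    · rw [← hlog_a]; exact Real.log_le_log ha0 ht.1
    · rw [← hlog_a]
      apply Real.log_le_log ha0
      rw [hb_def] at ht; linarith [ht.2]
  have hL0 : (0:ℝ) < L := by linarith
  have hLK0 : (0:ℝ) < L - K := by linarith
  have hc_pos : (0:ℝ) < c := by rw [hc_def]; exact div_pos hn0 hL0
  have hlog_c : Real.log c = L - K := by
    rw [hc_def, Real.log_div (by linarith) (by linarith), ← hL_def, ← hK_def]
  have hdn : d ≤ n := by rw [hd_def]; linarith
  -- pointwise bounds on the middle interval
  have hmid : ∀ t ∈ Icc c d, 1/L^2 ≤ f t ∧ f t ≤ 1/(L-K)^2 := by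
    intro t ht
    simp only [hf]
    have h1 : L - K ≤ Real.log t := by
      rw [← hlog_c]; exact Real.log_le_log hc_pos ht.1
    have h2 : Real.log t ≤ L := by
      rw [hL_def]
      exact Real.log_le_log (lt_of_lt_of_le hc_pos ht.1) (le_trans ht.2 hdn)
    have h3 : L - K ≤ Real.log (n - t) := by
      rw [← hlog_c]
      apply Real.log_le_log hc_pos
      rw [hd_def] at ht; linarith [ht.2]
    have h4 : Real.log (n - t) ≤ L := by
      rw [hL_def]
      apply Real.log_le_log ?_ (by linarith [hc_pos, ht.1])
      rw [hd_def] at ht; linarith [ht.2, hc_pos]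
    have hP1 : (L-K)^2 ≤ Real.log t * Real.log (n - t) := by nlinarith
    have hP2 : Real.log t * Real.log (n - t) ≤ L^2 := by nlinarith
    have hP0 : (0:ℝ) < Real.log t * Real.log (n - t) := by nlinarith
    constructor
    · exact one_div_le_one_div_of_le hP0 hP2
    · exact one_div_le_one_div_of_le (by positivity) hP1
  -- pointwise bounds on the whole interval
  have hwb : ∀ t ∈ Icc a b, 0 ≤ f t ∧ f t ≤ 4/L^2 := by
    intro t ht
    simp only [hf]
    obtain ⟨h1, h2⟩ := hwhole t ht
    have hP0 : (0:ℝ) < Real.log t * Real.log (n - t) := by nlinarith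
    constructor
    · positivity
    · rw [div_le_div_iff₀ hP0 (by positivity)]
      nlinarith
  -- continuity / integrability
  have hcont : ContinuousOn f (Icc a b) := by
    rw [hf]
    intro t ht
    have h1 : (0:ℝ) < Real.log t := lt_of_lt_of_le (by linarith) (hwhole t ht).1
    have h2 : (0:ℝ) < Real.log (n - t) := lt_of_lt_of_le (by linarith) (hwhole t ht).2
    have ht0 : t ≠ 0 := by intro h; rw [h] at h1; simp at h1
    have hnt0 : n - t ≠ 0 := by
      intro h; rw [h] at h2; simp at h2
    apply ContinuousAt.continuousWithinAt
    have c1 : ContinuousAt Real.log t := Real.continuousAt_log ht0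
    have c2 : ContinuousAt (fun s => Real.log (n - s)) t :=
      (Real.continuousAt_log hnt0).comp ((continuous_const.sub continuous_id).continuousAt)
    exact continuousAt_const.div (c1.mul c2) (by positivity)
  have hint : ∀ x y, a ≤ x → x ≤ y → y ≤ b → IntervalIntegrable f MeasureTheory.volume x y := by
    intro x y hx hxy hyb
    apply ContinuousOn.intervalIntegrable
    apply hcont.mono
    rw [Set.uIcc_of_le hxy]
    exact Set.Icc_subset_Icc (by linarith) (by linarith)
  -- splitting
  have hsplit : (∫ t in a..b, f t)
      = (∫ t in a..c, f t) + (∫ t in c..d, f t) + (∫ t in d..b, f t) := by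
    have e1 : (∫ t in a..c, f t) + (∫ t in c..d, f t) = ∫ t in a..d, f t :=
      integral_add_adjacent_intervals (hint a c le_rfl hac (by linarith))
        (hint c d hac hcd hdb)
    have e2 : (∫ t in a..d, f t) + (∫ t in d..b, f t) = ∫ t in a..b, f t :=
      integral_add_adjacent_intervals (hint a d le_rfl (by linarith) hdb)
        (hint d b (by linarith) hdb le_rfl)
    rw [e1, e2]
  have hL3pos : (0:ℝ) < L^3 := pow_pos hL0 3
  have hE2 : (0:ℝ) < 1/L^2 := one_div_pos.mpr (pow_pos hL0 2)
  have hE3 : (0:ℝ) < 1/L^3 := one_div_pos.mpr hL3pos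
  have hELK : (0:ℝ) < 1/(L-K)^2 := one_div_pos.mpr (pow_pos hLK0 2)
  -- tail bounds
  have hT1u : (∫ t in a..c, f t) ≤ 4*(n*(1/L^3)) := by
    have h := intervalIntegral.integral_mono_on hac (hint a c le_rfl hac (by linarith))
      (intervalIntegrable_const) (g := fun _ => 4/L^2)
      (fun t ht => (hwb t ⟨ht.1, le_trans ht.2 (by linarith)⟩).2)
    rw [intervalIntegral.integral_const, smul_eq_mul] at h
    have h2 : (c - a) * (4/L^2) ≤ c * (4/L^2) := by
      apply mul_le_mul_of_nonneg_right (by linarith) (by positivity)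
    have h3 : c * (4/L^2) = 4*(n*(1/L^3)) := by
      rw [hc_def]; field_simp
    linarith
  have hT2u : (∫ t in d..b, f t) ≤ 4*(n*(1/L^3)) := by
    have h := intervalIntegral.integral_mono_on hdb (hint d b (by linarith) hdb le_rfl)
      (intervalIntegrable_const) (g := fun _ => 4/L^2)
      (fun t ht => (hwb t ⟨le_trans (by linarith : a ≤ d) ht.1, ht.2⟩).2)
    rw [intervalIntegral.integral_const, smul_eq_mul] at h
    have hbd : b - d = c - a := by rw [hb_def, hd_def]; ring
    have h2 : (b - d) * (4/L^2) ≤ c * (4/L^2) := by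
      rw [hbd]
      apply mul_le_mul_of_nonneg_right (by linarith) (by positivity)
    have h3 : c * (4/L^2) = 4*(n*(1/L^3)) := by
      rw [hc_def]; field_simp
    linarith
  have hT1l : 0 ≤ ∫ t in a..c, f t :=
    intervalIntegral.integral_nonneg hac
      (fun t ht => (hwb t ⟨ht.1, le_trans ht.2 (by linarith)⟩).1)
  have hT2l : 0 ≤ ∫ t in d..b, f t :=
    intervalIntegral.integral_nonneg hdb
      (fun t ht => (hwb t ⟨le_trans (by linarith : a ≤ d) ht.1, ht.2⟩).1)
  -- middle bounds
  have hMu : (∫ t in c..d, f t) ≤ (d - c) * (1/(L-K)^2) := by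
    have h := intervalIntegral.integral_mono_on hcd (hint c d hac hcd hdb)
      (intervalIntegrable_const) (g := fun _ => 1/(L-K)^2)
      (fun t ht => (hmid t ht).2)
    rw [intervalIntegral.integral_const, smul_eq_mul] at h
    exact h
  have hMl : (d - c) * (1/L^2) ≤ ∫ t in c..d, f t := by
    have h := intervalIntegral.integral_mono_on hcd (intervalIntegrable_const)
      (hint c d hac hcd hdb) (f := fun _ => 1/L^2)
      (fun t ht => (hmid t ht).1)
    rw [intervalIntegral.integral_const, smul_eq_mul] at h
    exact h
  -- key algebraic inequality
  have hkey : (1:ℝ)/(L-K)^2 ≤ (L + 8*K)/L^3 := by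
    rw [div_le_div_iff₀ (pow_pos hLK0 2) hL3pos]
    nlinarith [mul_nonneg (by linarith : (0:ℝ) ≤ L/2 - K) (by linarith : (0:ℝ) ≤ 12*L - 6*K),
      sq_nonneg K, mul_pos hL0 hL0]
  have hMu2 : (∫ t in c..d, f t) ≤ n*(1/L^2) + 8*(n*K*(1/L^3)) := by
    have h1 : (d - c) * (1/(L-K)^2) ≤ n * ((L + 8*K)/L^3) := by
      apply mul_le_mul (by rw [hd_def]; linarith) hkey hELK.le hn0.le
    have h2 : n * ((L + 8*K)/L^3) = n*(1/L^2) + 8*(n*K*(1/L^3)) := by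
      field_simp
    linarith
  have hkk : n*(1/L^3) ≤ n*K*(1/L^3) := by
    have := mul_le_mul_of_nonneg_right
      (mul_le_mul_of_nonneg_left hK1 hn0.le) hE3.le
    nlinarith [this]
  have hMl2 : n*(1/L^2) - 2*(n*K*(1/L^3)) ≤ ∫ t in c..d, f t := by
    have h1 : (d - c) * (1/L^2) = n*(1/L^2) - 2*(n*(1/L^3)) := by
      rw [hd_def, hc_def]; field_simp; ring
    linarith
  -- conclude
  have hnk0 : 0 ≤ n*K*(1/L^3) :=
    mul_nonneg (mul_nonneg hn0.le (by linarith)) hE3.le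
  rw [abs_le]
  have hg1 : 20 * n * K / L ^ 3 = 20*(n*K*(1/L^3)) := by ring
  have hg2 : n / L ^ 2 = n*(1/L^2) := by ring
  rw [hsplit, hg1, hg2]
  constructor
  · linarith
  · linarith
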